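/- arXiv:1408.1923 — 2 statements merged into one kernel-verified Lean document; each statement's English description precedes it below -/
import Mathlib

section
/- Let 0 < k ≤ 2, M ≥ 0 and 0 < μ ≤ 1. Let (f_n)_{n≥1} be a real sequence with Σ_{n≥1} (1+n²)^{2k} f_n² ≤ M². Then (Σ_{n≥1} (μ² f_n / (μ² + Φ(n,φ)²))²)^{1/2} ≤ max{1, D₂² / [B₁(1 − e^{−D₁T})]²} · M · μ^{k/2}. (This bounds the bias ‖f − f_μ‖ of the Tikhonov approximation with exact data.) -/
/-!
Since `a ≤ D₂`, `B(t) ≥ D₂ (t - T)` on `[0, T]`, so `φ ≥ B₁` gives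
`Φ(n, φ) ≥ B₁ ∫₀ᵀ e^{n² D₂ (t - T)} dt ≥ 1 / (κ n²)` with `κ = D₂ / (B₁ (1 - e^{-D₁ T}))`.
The Tikhonov filter `r = μ² / (μ² + Φ²)` is at most `min (1, μ² / Φ²) ≤ (μ κ n²)^k` for
`0 ≤ k ≤ 2`, and `κ^k ≤ max (1, κ²)`. Together with `r² ≤ r` and `n^{2k} ≤ (1 + n²)^{2k}`, each
term of the series is at most `max (1, κ²)² μ^k (1 + n²)^{2k} f_n²`, and summing gives the bound.
-/

open Real Set intervalIntegral MeasureTheory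

section Kernel

variable {a φ B : ℝ → ℝ} {T D D₁ B₁ m : ℝ}

theorem mul_sub_le_primitive_sub (ha : ContinuousOn a (Icc 0 T))
    (haD : ∀ t ∈ Icc 0 T, a t ≤ D) {t : ℝ} (ht : t ∈ Icc 0 T) :
    D * (t - T) ≤ (∫ s in (0:ℝ)..t, a s) - ∫ s in (0:ℝ)..T, a s := by
  have hint : ∀ u v, u ∈ Icc 0 T → v ∈ Icc 0 T → IntervalIntegrable a volume u v :=
    fun u v hu hv => (ha.mono (uIcc_subset_Icc hu hv)).intervalIntegrable
  have hT : T ∈ Icc 0 T := ⟨ht.1.trans ht.2, le_rfl⟩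
  have h0 : (0:ℝ) ∈ Icc 0 T := ⟨le_rfl, hT.1⟩
  have hle : ∫ s in t..T, a s ≤ ∫ _ in t..T, D :=
    integral_mono_on ht.2 (hint t T ht hT) intervalIntegrable_const
      fun s hs => haD s ⟨ht.1.trans hs.1, hs.2⟩
  rw [← integral_add_adjacent_intervals (hint 0 t h0 ht) (hint t T ht hT)]
  simp only [intervalIntegral.integral_const, smul_eq_mul] at hle
  linarith

theorem integral_exp_mul_sub (hm : m ≠ 0) :
    ∫ t in (0:ℝ)..T, exp (m * (t - T)) = (1 - exp (-(m * T))) / m := by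
  simp only [mul_sub]
  rw [integral_comp_mul_sub (fun x => exp x) hm, integral_exp]
  simp only [mul_zero, zero_sub, sub_self, exp_zero, smul_eq_mul]
  field_simp

theorem mul_one_sub_exp_div_le_integral (hT : 0 ≤ T) (hm : 0 < m) (hD : 0 < D) (hB₁ : 0 ≤ B₁)
    (hBc : ContinuousOn B (Icc 0 T)) (hφc : ContinuousOn φ (Icc 0 T))
    (hBD : ∀ t ∈ Icc 0 T, D * (t - T) ≤ B t) (hφB : ∀ t ∈ Icc 0 T, B₁ ≤ φ t) :
    B₁ * (1 - exp (-(m * D * T))) / (m * D) ≤ ∫ t in (0:ℝ)..T, exp (m * B t) * φ t := by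
  have hmD : m * D ≠ 0 := by positivity
  calc B₁ * (1 - exp (-(m * D * T))) / (m * D)
      = ∫ t in (0:ℝ)..T, exp (m * D * (t - T)) * B₁ := by
        rw [intervalIntegral.integral_mul_const, integral_exp_mul_sub hmD]; ring
    _ ≤ ∫ t in (0:ℝ)..T, exp (m * B t) * φ t := by
      refine integral_mono_on hT (Continuous.intervalIntegrable (by fun_prop) _ _) ?_ fun t ht => ?_
      · rw [← uIcc_of_le hT] at hBc hφc
        exact ((continuous_exp.comp_continuousOn (hBc.const_smul m)).mul hφc).intervalIntegrable
      · have hexp : m * D * (t - T) ≤ m * B t := by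
          rw [mul_assoc]; exact mul_le_mul_of_nonneg_left (hBD t ht) hm.le
        exact mul_le_mul (exp_le_exp.2 hexp) (hφB t ht) hB₁ (exp_nonneg _)

theorem mul_one_sub_exp_div_le_integral_exp_primitive (hT : 0 ≤ T) (hD₁ : 0 < D₁) (hD₁D : D₁ ≤ D)
    (hB₁ : 0 ≤ B₁) (ha : ContinuousOn a (Icc 0 T)) (hφc : ContinuousOn φ (Icc 0 T))
    (haD : ∀ t ∈ Icc 0 T, a t ≤ D) (hφB : ∀ t ∈ Icc 0 T, B₁ ≤ φ t) {N : ℝ} (hN : 1 ≤ N) :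
    B₁ * (1 - exp (-D₁ * T)) / (N ^ 2 * D) ≤
      ∫ t in (0:ℝ)..T, exp (N ^ 2 * ((∫ s in (0:ℝ)..t, a s) - ∫ s in (0:ℝ)..T, a s)) * φ t := by
  have hN2 : 1 ≤ N ^ 2 := one_le_pow₀ hN
  have hD : 0 < D := hD₁.trans_le hD₁D
  have hprim : ContinuousOn (fun t => ∫ s in (0:ℝ)..t, a s) (Icc 0 T) := by
    rw [← uIcc_of_le hT]
    exact continuousOn_primitive_interval (by rw [uIcc_of_le hT]; exact ha.integrableOn_Icc)
  refine le_trans ?_ (mul_one_sub_exp_div_le_integral hT (by positivity) hD hB₁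
    (hprim.sub continuousOn_const) hφc (fun t ht => mul_sub_le_primitive_sub ha haD ht) hφB)
  have hexp : D₁ * T ≤ N ^ 2 * D * T := by
    gcongr
    nlinarith
  gcongr
  rw [neg_mul]
  exact neg_le_neg hexp

end Kernel

theorem sq_div_sq_add_sq_le_rpow {μ P p k : ℝ} (hp : 0 < p) (hpP : p ≤ P)
    (hk0 : 0 ≤ k) (hk2 : k ≤ 2) (hμ : 0 ≤ μ) :
    μ ^ 2 / (μ ^ 2 + P ^ 2) ≤ (μ / p) ^ k := by
  have hP : 0 < P ^ 2 := by have := hp.trans_le hpP; positivity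
  have hle_one : μ ^ 2 / (μ ^ 2 + P ^ 2) ≤ 1 := div_le_one_of_le₀ (by linarith) (by positivity)
  have hle_sq : μ ^ 2 / (μ ^ 2 + P ^ 2) ≤ (μ / p) ^ 2 := by
    rw [div_pow]
    have : p ^ 2 ≤ P ^ 2 := pow_le_pow_left₀ hp.le hpP 2
    gcongr
    nlinarith
  rcases le_total 1 (μ / p) with h | h
  · exact hle_one.trans (one_le_rpow h hk0)
  · refine hle_sq.trans ?_
    rw [← rpow_natCast]
    exact rpow_le_rpow_of_exponent_ge' (by positivity) h hk0 (by norm_num; exact hk2)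

theorem rpow_le_max_one_sq {x k : ℝ} (hx : 0 ≤ x) (hk0 : 0 ≤ k) (hk2 : k ≤ 2) :
    x ^ k ≤ max 1 (x ^ 2) := by
  rcases le_total 1 x with h | h
  · refine le_max_of_le_right ?_
    rw [← rpow_natCast]
    exact rpow_le_rpow_of_exponent_le h (by norm_num; exact hk2)
  · exact le_max_of_le_left (rpow_le_one hx h hk0)


theorem tikhonov_term_le {μ P f κ N k : ℝ} (hμ : 0 ≤ μ) (hκ : 0 < κ) (hN : 0 < N)
    (hP : (κ * N ^ 2)⁻¹ ≤ P) (hk0 : 0 ≤ k) (hk2 : k ≤ 2) :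
    (μ ^ 2 * f / (μ ^ 2 + P ^ 2)) ^ 2 ≤
      (max 1 (κ ^ 2) * μ ^ (k / 2)) ^ 2 * ((1 + N ^ 2) ^ (2 * k) * f ^ 2) := by
  set r := μ ^ 2 / (μ ^ 2 + P ^ 2)
  set C := max 1 (κ ^ 2)
  have hC : 1 ≤ C := le_max_left _ _
  have hr0 : 0 ≤ r := by positivity
  have hr1 : r ≤ 1 := div_le_one_of_le₀ (by nlinarith) (by positivity)
  have hfilter : r ≤ (μ / (κ * N ^ 2)⁻¹) ^ k :=
    sq_div_sq_add_sq_le_rpow (by positivity) hP hk0 hk2 hμ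
  have hweight : (N ^ 2) ^ k ≤ (1 + N ^ 2) ^ (2 * k) :=
    calc (N ^ 2) ^ k ≤ (1 + N ^ 2) ^ k := by gcongr; linarith
      _ ≤ (1 + N ^ 2) ^ (2 * k) := rpow_le_rpow_of_exponent_le (by nlinarith) (by linarith)
  have hμk : (μ ^ (k / 2)) ^ 2 = μ ^ k := by
    rw [← rpow_natCast, ← rpow_mul hμ]; norm_num
  have hr : r ≤ C ^ 2 * μ ^ k * (1 + N ^ 2) ^ (2 * k) :=
    calc r ≤ (μ / (κ * N ^ 2)⁻¹) ^ k := hfilter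
      _ = μ ^ k * κ ^ k * (N ^ 2) ^ k := by
        rw [div_inv_eq_mul, mul_rpow hμ (by positivity), mul_rpow hκ.le (by positivity), mul_assoc]
      _ ≤ μ ^ k * C * (1 + N ^ 2) ^ (2 * k) := by
        gcongr
        exact rpow_le_max_one_sq hκ.le hk0 hk2
      _ = C * (μ ^ k * (1 + N ^ 2) ^ (2 * k)) := by ring
      _ ≤ C ^ 2 * (μ ^ k * (1 + N ^ 2) ^ (2 * k)) := by gcongr; nlinarith
      _ = C ^ 2 * μ ^ k * (1 + N ^ 2) ^ (2 * k) := by ring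
  calc (μ ^ 2 * f / (μ ^ 2 + P ^ 2)) ^ 2 = r ^ 2 * f ^ 2 := by ring
    _ ≤ r * f ^ 2 := by gcongr; nlinarith
    _ ≤ (C ^ 2 * μ ^ k * (1 + N ^ 2) ^ (2 * k)) * f ^ 2 := by gcongr
    _ = (C * μ ^ (k / 2)) ^ 2 * ((1 + N ^ 2) ^ (2 * k) * f ^ 2) := by rw [mul_pow, hμk]; ring

theorem sqrt_tsum_le_of_le_sq_mul {u v : ℕ → ℝ} {K M : ℝ} (hu : ∀ n, 0 ≤ u n)
    (huv : ∀ n, u n ≤ K ^ 2 * v n) (hv : Summable v) (hvM : ∑' n, v n ≤ M ^ 2)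
    (hK : 0 ≤ K) (hM : 0 ≤ M) : √(∑' n, u n) ≤ K * M := by
  rw [sqrt_le_left (by positivity), mul_pow]
  have hKv := hv.mul_left (K ^ 2)
  calc ∑' n, u n ≤ ∑' n, K ^ 2 * v n := Summable.tsum_le_tsum huv (hKv.of_nonneg_of_le hu huv) hKv
    _ = K ^ 2 * ∑' n, v n := tsum_mul_left
    _ ≤ K ^ 2 * M ^ 2 := by gcongr

theorem stmt_8_general
    (T D₁ D₂ B₁ B₂ : ℝ) (hT : 0 < T) (hD₁ : 0 < D₁) (hD₁₂ : D₁ ≤ D₂)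
    (hB₁ : 0 < B₁)
    (a φ : ℝ → ℝ) (ha : ContinuousOn a (Set.Icc 0 T)) (hφc : ContinuousOn φ (Set.Icc 0 T))
    (haB : ∀ t ∈ Set.Icc 0 T, D₁ ≤ a t ∧ a t ≤ D₂)
    (hφB : ∀ t ∈ Set.Icc 0 T, B₁ ≤ φ t ∧ φ t ≤ B₂)
    (A Bf : ℝ → ℝ) (hA : ∀ t, A t = ∫ s in (0:ℝ)..t, a s)
    (hBf : ∀ t, Bf t = A t - A T)
    (Φ : ℕ → (ℝ → ℝ) → ℝ)
    (hΦ : ∀ (n : ℕ) (h : ℝ → ℝ), Φ n h = ∫ t in (0:ℝ)..T, Real.exp ((n:ℝ)^2 * Bf t) * h t)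
    (k M μ : ℝ) (hk0 : 0 < k) (hk2 : k ≤ 2) (hM : 0 ≤ M) (hμ0 : 0 < μ)
    (f : ℕ → ℝ)
    (hwsum : Summable (fun n : ℕ => ((1:ℝ) + ((n:ℝ)+1)^2) ^ (2*k) * (f (n+1))^2))
    (hbound : (∑' n : ℕ, ((1:ℝ) + ((n:ℝ)+1)^2) ^ (2*k) * (f (n+1))^2) ≤ M^2) :
    Real.sqrt (∑' n : ℕ, (μ^2 * f (n+1) / (μ^2 + (Φ (n+1) φ)^2))^2) ≤
      max 1 (D₂^2 / (B₁ * (1 - Real.exp (-D₁ * T)))^2) * M * μ ^ (k/2) := by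
  set κ := D₂ / (B₁ * (1 - Real.exp (-D₁ * T))) with hκ_def
  have hκ : 0 < κ := by
    have hexp : Real.exp (-D₁ * T) < 1 := Real.exp_lt_one_iff.2 (by nlinarith)
    exact div_pos (hD₁.trans_le hD₁₂) (mul_pos hB₁ (sub_pos.2 hexp))
  have hΦ_ge : ∀ n : ℕ, (κ * ((n:ℝ) + 1) ^ 2)⁻¹ ≤ Φ (n + 1) φ := by
    intro n
    have hN : (1:ℝ) ≤ (n:ℝ) + 1 := by linarith [n.cast_nonneg (α := ℝ)]
    have := mul_one_sub_exp_div_le_integral_exp_primitive hT.le hD₁ hD₁₂ hB₁.le ha hφc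
      (fun t ht => (haB t ht).2) (fun t ht => (hφB t ht).1) hN
    simp only [hΦ, hBf, hA]
    push_cast
    convert this using 1
    rw [hκ_def]
    field_simp
  rw [← div_pow, mul_right_comm]
  exact sqrt_tsum_le_of_le_sq_mul (fun n => sq_nonneg _)
    (fun n => tikhonov_term_le hμ0.le hκ (by positivity) (hΦ_ge n) hk0.le hk2) hwsum hbound
    (by positivity) hM

/-- bias bound, `0 < k ≤ 2`: if `Σ (1+n²)^{2k} f_n² ≤ M²` and `0 < μ ≤ 1`, then
`(Σ (μ² f_n/(μ² + Φ(n,φ)²))²)^{1/2} ≤ max{1, D₂²/[B₁(1−e^{−D₁T})]²} · M · μ^{k/2}`. -/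
theorem stmt_8
    (T D₁ D₂ B₁ B₂ : ℝ) (hT : 0 < T) (hD₁ : 0 < D₁) (hD₁₂ : D₁ ≤ D₂)
    (hB₁ : 0 < B₁) (hB₁₂ : B₁ ≤ B₂)
    (a φ : ℝ → ℝ) (ha : ContinuousOn a (Set.Icc 0 T)) (hφc : ContinuousOn φ (Set.Icc 0 T))
    (haB : ∀ t ∈ Set.Icc 0 T, D₁ ≤ a t ∧ a t ≤ D₂)
    (hφB : ∀ t ∈ Set.Icc 0 T, B₁ ≤ φ t ∧ φ t ≤ B₂)
    (A Bf : ℝ → ℝ) (hA : ∀ t, A t = ∫ s in (0:ℝ)..t, a s)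
    (hBf : ∀ t, Bf t = A t - A T)
    (Φ : ℕ → (ℝ → ℝ) → ℝ)
    (hΦ : ∀ (n : ℕ) (h : ℝ → ℝ), Φ n h = ∫ t in (0:ℝ)..T, Real.exp ((n:ℝ)^2 * Bf t) * h t)
    (k M μ : ℝ) (hk0 : 0 < k) (hk2 : k ≤ 2) (hM : 0 ≤ M) (hμ0 : 0 < μ) (hμ1 : μ ≤ 1)
    (f : ℕ → ℝ)
    (hwsum : Summable (fun n : ℕ => ((1:ℝ) + ((n:ℝ)+1)^2) ^ (2*k) * (f (n+1))^2))
    (hbound : (∑' n : ℕ, ((1:ℝ) + ((n:ℝ)+1)^2) ^ (2*k) * (f (n+1))^2) ≤ M^2) :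
    Real.sqrt (∑' n : ℕ, (μ^2 * f (n+1) / (μ^2 + (Φ (n+1) φ)^2))^2) ≤
      max 1 (D₂^2 / (B₁ * (1 - Real.exp (-D₁ * T)))^2) * M * μ ^ (k/2) :=
  stmt_8_general T D₁ D₂ B₁ B₂ hT hD₁ hD₁₂ hB₁ a φ ha hφc haB hφB A Bf hA hBf Φ hΦ k M μ hk0 hk2 hM
    hμ0 f hwsum hbound
end

section
/- Let k > 2, M ≥ 0 and 0 < μ ≤ 1. Let (f_n)_{n≥1} be a real sequence with Σ_{n≥1} (1+n²)^{2k} f_n² ≤ M². Then (Σ_{n≥1} (μ² f_n / (μ² + Φ(n,φ)²))²)^{1/2} ≤ max{1, D₂² / [B₁(1 − e^{−D₁T})]²} · M · μ. (This bounds the bias ‖f − f_μ‖ of the Tikhonov approximation with exact data.) -/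
/-! Since `a ≤ D₂`, `B(t) ≥ D₂ (t - T)` on `[0, T]`, so comparing with `∫₀ᵀ B₁ e^{n² D₂ (t - T)} dt`
gives `Φ(n, φ) ≥ B₁ (1 - e^{-D₁ T}) / (n² D₂)`. The filter factor then satisfies
`μ² / (μ² + Φ²) ≤ μ / (2Φ) ≤ μ n² D₂ / (2 B₁ (1 - e^{-D₁ T})) ≤ C μ (1 + n²)^k`, with `C` the constant
of the statement; squaring, multiplying by `f_n²` and summing against the weighted bound `M²`
gives the claim. -/

open Real Set MeasureTheory intervalIntegral

theorem integral_exp_mul_sub_eq {c : ℝ} (hc : c ≠ 0) (T : ℝ) :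
    ∫ t in (0:ℝ)..T, exp (c * (t - T)) = (1 - exp (-(c * T))) / c := by
  simp_rw [mul_sub]
  rw [integral_comp_mul_sub (f := exp) hc, integral_exp]
  simp only [sub_self, exp_zero, mul_zero, zero_sub, smul_eq_mul]
  field_simp

theorem mul_sub_le_integral_sub_integral {a : ℝ → ℝ} {D T t : ℝ}
    (ha : IntervalIntegrable a volume 0 T) (haD : ∀ s ∈ Icc 0 T, a s ≤ D) (ht : t ∈ Icc 0 T) :
    D * (t - T) ≤ (∫ s in (0:ℝ)..t, a s) - ∫ s in (0:ℝ)..T, a s := by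
  have hsub : uIcc 0 t ⊆ uIcc 0 T := uIcc_subset_uIcc_left (Icc_subset_uIcc ht)
  rw [integral_interval_sub_left (ha.mono_set hsub) ha, integral_symm]
  have hle : ∫ s in t..T, a s ≤ ∫ s in t..T, D :=
    integral_mono_on ht.2 ((ha.mono_set hsub).symm.trans ha) intervalIntegrable_const
      fun s hs => haD s ⟨ht.1.trans hs.1, hs.2⟩
  rw [intervalIntegral.integral_const, smul_eq_mul] at hle
  linarith

theorem div_le_integral_exp_mul {g φ : ℝ → ℝ} {T c B₁ : ℝ} (hT : 0 ≤ T) (hc : 0 < c)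
    (hint : IntervalIntegrable (fun t => exp (g t) * φ t) volume 0 T)
    (hg : ∀ t ∈ Icc 0 T, c * (t - T) ≤ g t) (hφ : ∀ t ∈ Icc 0 T, B₁ ≤ φ t) (hB₁ : 0 ≤ B₁) :
    B₁ * (1 - exp (-(c * T))) / c ≤ ∫ t in (0:ℝ)..T, exp (g t) * φ t := by
  calc B₁ * (1 - exp (-(c * T))) / c = ∫ t in (0:ℝ)..T, B₁ * exp (c * (t - T)) := by
        rw [intervalIntegral.integral_const_mul, integral_exp_mul_sub_eq hc.ne']; ring
    _ ≤ ∫ t in (0:ℝ)..T, exp (g t) * φ t := by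
        refine integral_mono_on hT (Continuous.intervalIntegrable (by fun_prop) _ _) hint
          fun t ht => ?_
        rw [mul_comm]
        exact mul_le_mul (exp_le_exp.2 (hg t ht)) (hφ t ht) hB₁ (exp_pos _).le

theorem div_le_integral_exp_mul_primitive {a φ : ℝ → ℝ} {T D q B₁ : ℝ} (hT : 0 ≤ T)
    (hq : 0 < q) (hD : 0 < D) (ha : ContinuousOn a (Icc 0 T)) (haD : ∀ t ∈ Icc 0 T, a t ≤ D)
    (hφ : ContinuousOn φ (Icc 0 T)) (hφB : ∀ t ∈ Icc 0 T, B₁ ≤ φ t) (hB₁ : 0 ≤ B₁) :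
    B₁ * (1 - exp (-(q * D * T))) / (q * D) ≤
      ∫ t in (0:ℝ)..T, exp (q * ((∫ s in (0:ℝ)..t, a s) - ∫ s in (0:ℝ)..T, a s)) * φ t := by
  have haI : IntervalIntegrable a volume 0 T := ha.intervalIntegrable_of_Icc hT
  have hprim : ContinuousOn (fun t => ∫ s in (0:ℝ)..t, a s) (Icc 0 T) := by
    simpa only [uIcc_of_le hT] using continuousOn_primitive_interval' haI left_mem_uIcc
  refine div_le_integral_exp_mul hT (mul_pos hq hD) ?_ (fun t ht => ?_) hφB hB₁
  · exact ContinuousOn.intervalIntegrable_of_Icc hT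
      (((hprim.sub continuousOn_const).const_smul q).rexp.mul hφ)
  · rw [mul_assoc]
    exact mul_le_mul_of_nonneg_left (mul_sub_le_integral_sub_integral haI haD ht) hq.le

theorem sq_div_sq_add_sq_le {μ Φ c m : ℝ} (hμ : 0 ≤ μ) (hc : 0 < c) (hm : 0 < m)
    (hΦ : c / m ≤ Φ) : μ ^ 2 / (μ ^ 2 + Φ ^ 2) ≤ μ * m / (2 * c) := by
  have hΦ0 : 0 < Φ := (div_pos hc hm).trans_le hΦ
  have hcΦ : c ≤ Φ * m := (div_le_iff₀ hm).1 hΦ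
  calc μ ^ 2 / (μ ^ 2 + Φ ^ 2) ≤ μ / (2 * Φ) := by
        rw [div_le_div_iff₀ (by positivity) (by positivity)]
        nlinarith [sq_nonneg (μ - Φ)]
    _ ≤ μ * m / (2 * c) := by
        rw [div_le_div_iff₀ (by positivity) (by positivity)]
        nlinarith

theorem half_le_max_one_sq {x : ℝ} (hx : 0 ≤ x) : x / 2 ≤ max 1 (x ^ 2) := by
  rcases le_total x 1 with h | h
  · exact le_max_of_le_left (by linarith)
  · exact le_max_of_le_right (by nlinarith)

theorem sq_le_one_add_sq_rpow (m : ℝ) {k : ℝ} (hk : 1 ≤ k) : m ^ 2 ≤ (1 + m ^ 2) ^ k :=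
  calc m ^ 2 ≤ (1 + m ^ 2) ^ (1 : ℝ) := by rw [rpow_one]; linarith
    _ ≤ (1 + m ^ 2) ^ k := rpow_le_rpow_of_exponent_le (by nlinarith) hk

theorem sq_div_sq_add_sq_le_max_mul_rpow {μ Φ c D m k : ℝ} (hμ : 0 ≤ μ) (hc : 0 < c)
    (hD : 0 < D) (hm : m ≠ 0) (hk : 1 ≤ k) (hΦ : c / (m ^ 2 * D) ≤ Φ) :
    μ ^ 2 / (μ ^ 2 + Φ ^ 2) ≤ max 1 (D ^ 2 / c ^ 2) * μ * (1 + m ^ 2) ^ k := by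
  have hmax : D / c / 2 ≤ max 1 (D ^ 2 / c ^ 2) := by
    simpa only [div_pow] using half_le_max_one_sq (div_pos hD hc).le
  calc μ ^ 2 / (μ ^ 2 + Φ ^ 2) ≤ μ * (m ^ 2 * D) / (2 * c) :=
        sq_div_sq_add_sq_le hμ hc (by positivity) hΦ
    _ = D / c / 2 * μ * m ^ 2 := by field_simp
    _ ≤ max 1 (D ^ 2 / c ^ 2) * μ * (1 + m ^ 2) ^ k := by
        gcongr
        exact sq_le_one_add_sq_rpow m hk

theorem sqrt_tsum_sq_le_mul {g s : ℕ → ℝ} {K M : ℝ} (hK : 0 ≤ K) (hM : 0 ≤ M)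
    (hs : Summable s) (hsM : ∑' n, s n ≤ M ^ 2) (hgs : ∀ n, g n ^ 2 ≤ K ^ 2 * s n) :
    √(∑' n, g n ^ 2) ≤ K * M := by
  refine sqrt_le_iff.2 ⟨mul_nonneg hK hM, ?_⟩
  have hKs : Summable fun n => K ^ 2 * s n := hs.mul_left _
  calc ∑' n, g n ^ 2 ≤ ∑' n, K ^ 2 * s n :=
        (hKs.of_nonneg_of_le (fun n => sq_nonneg _) hgs).tsum_le_tsum hgs hKs
    _ = K ^ 2 * ∑' n, s n := tsum_mul_left
    _ ≤ (K * M) ^ 2 := by rw [mul_pow]; gcongr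

theorem stmt_9_general
    (T D₁ D₂ B₁ B₂ : ℝ) (hT : 0 < T) (hD₁ : 0 < D₁) (hD₁₂ : D₁ ≤ D₂)
    (hB₁ : 0 < B₁)
    (a φ : ℝ → ℝ) (ha : ContinuousOn a (Set.Icc 0 T)) (hφc : ContinuousOn φ (Set.Icc 0 T))
    (haB : ∀ t ∈ Set.Icc 0 T, D₁ ≤ a t ∧ a t ≤ D₂)
    (hφB : ∀ t ∈ Set.Icc 0 T, B₁ ≤ φ t ∧ φ t ≤ B₂)
    (A Bf : ℝ → ℝ) (hA : ∀ t, A t = ∫ s in (0:ℝ)..t, a s)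
    (hBf : ∀ t, Bf t = A t - A T)
    (Φ : ℕ → (ℝ → ℝ) → ℝ)
    (hΦ : ∀ (n : ℕ) (h : ℝ → ℝ), Φ n h = ∫ t in (0:ℝ)..T, Real.exp ((n:ℝ)^2 * Bf t) * h t)
    (k M μ : ℝ) (hk : 2 < k) (hM : 0 ≤ M) (hμ0 : 0 < μ)
    (f : ℕ → ℝ)
    (hwsum : Summable (fun n : ℕ => ((1:ℝ) + ((n:ℝ)+1)^2) ^ (2*k) * (f (n+1))^2))
    (hbound : (∑' n : ℕ, ((1:ℝ) + ((n:ℝ)+1)^2) ^ (2*k) * (f (n+1))^2) ≤ M^2) :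
    Real.sqrt (∑' n : ℕ, (μ^2 * f (n+1) / (μ^2 + (Φ (n+1) φ)^2))^2) ≤
      max 1 (D₂^2 / (B₁ * (1 - Real.exp (-D₁ * T)))^2) * M * μ := by
  have hD₂ : 0 < D₂ := hD₁.trans_le hD₁₂
  have hc : 0 < B₁ * (1 - exp (-D₁ * T)) :=
    mul_pos hB₁ (sub_pos.2 (exp_lt_one_iff.2 (by nlinarith)))
  have hΦ_ge (n : ℕ) : B₁ * (1 - exp (-D₁ * T)) / (((n:ℝ) + 1) ^ 2 * D₂) ≤ Φ (n + 1) φ := by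
    have hq : 1 ≤ ((n:ℝ) + 1) ^ 2 := one_le_pow₀ (by linarith [n.cast_nonneg (α := ℝ)])
    simp_rw [hΦ, hBf, hA]
    push_cast
    refine le_trans ?_ (div_le_integral_exp_mul_primitive hT.le (by positivity) hD₂ ha
      (fun t ht => (haB t ht).2) hφc (fun t ht => (hφB t ht).1) hB₁.le)
    have hDq : D₁ ≤ ((n:ℝ) + 1) ^ 2 * D₂ := by nlinarith
    gcongr
    nlinarith [mul_le_mul_of_nonneg_right hDq hT.le]
  refine (sqrt_tsum_sq_le_mul (K := max 1 (D₂ ^ 2 / (B₁ * (1 - exp (-D₁ * T))) ^ 2) * μ)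
    (by positivity) hM hwsum hbound fun n => ?_).trans_eq (by ring)
  have hfilter := sq_div_sq_add_sq_le_max_mul_rpow hμ0.le hc hD₂ (by positivity)
    (by linarith : (1:ℝ) ≤ k) (hΦ_ge n)
  calc (μ ^ 2 * f (n + 1) / (μ ^ 2 + Φ (n + 1) φ ^ 2)) ^ 2
      = (μ ^ 2 / (μ ^ 2 + Φ (n + 1) φ ^ 2)) ^ 2 * f (n + 1) ^ 2 := by ring
    _ ≤ (_ * μ * (1 + ((n:ℝ) + 1) ^ 2) ^ k) ^ 2 * f (n + 1) ^ 2 := by gcongr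
    _ = _ := by rw [mul_comm 2 k, rpow_mul (by positivity), rpow_two]; ring

/-- bias bound, `k > 2`: if `Σ (1+n²)^{2k} f_n² ≤ M²` and `0 < μ ≤ 1`, then
`(Σ (μ² f_n/(μ² + Φ(n,φ)²))²)^{1/2} ≤ max{1, D₂²/[B₁(1−e^{−D₁T})]²} · M · μ`. -/
theorem stmt_9
    (T D₁ D₂ B₁ B₂ : ℝ) (hT : 0 < T) (hD₁ : 0 < D₁) (hD₁₂ : D₁ ≤ D₂)
    (hB₁ : 0 < B₁) (hB₁₂ : B₁ ≤ B₂)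
    (a φ : ℝ → ℝ) (ha : ContinuousOn a (Set.Icc 0 T)) (hφc : ContinuousOn φ (Set.Icc 0 T))
    (haB : ∀ t ∈ Set.Icc 0 T, D₁ ≤ a t ∧ a t ≤ D₂)
    (hφB : ∀ t ∈ Set.Icc 0 T, B₁ ≤ φ t ∧ φ t ≤ B₂)
    (A Bf : ℝ → ℝ) (hA : ∀ t, A t = ∫ s in (0:ℝ)..t, a s)
    (hBf : ∀ t, Bf t = A t - A T)
    (Φ : ℕ → (ℝ → ℝ) → ℝ)
    (hΦ : ∀ (n : ℕ) (h : ℝ → ℝ), Φ n h = ∫ t in (0:ℝ)..T, Real.exp ((n:ℝ)^2 * Bf t) * h t)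
    (k M μ : ℝ) (hk : 2 < k) (hM : 0 ≤ M) (hμ0 : 0 < μ) (hμ1 : μ ≤ 1)
    (f : ℕ → ℝ)
    (hwsum : Summable (fun n : ℕ => ((1:ℝ) + ((n:ℝ)+1)^2) ^ (2*k) * (f (n+1))^2))
    (hbound : (∑' n : ℕ, ((1:ℝ) + ((n:ℝ)+1)^2) ^ (2*k) * (f (n+1))^2) ≤ M^2) :
    Real.sqrt (∑' n : ℕ, (μ^2 * f (n+1) / (μ^2 + (Φ (n+1) φ)^2))^2) ≤
      max 1 (D₂^2 / (B₁ * (1 - Real.exp (-D₁ * T)))^2) * M * μ :=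
  stmt_9_general T D₁ D₂ B₁ B₂ hT hD₁ hD₁₂ hB₁ a φ ha hφc haB hφB A Bf hA hBf Φ hΦ k M μ hk hM hμ0 f
    hwsum hbound
end
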